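/- arXiv:2107.00603 — 2 statements merged into one kernel-verified Lean document; each statement's English description precedes it below -/
import Mathlib

section
/- Let O ⊆ ℝ^d be open, τ(x) = inf{t∈[0,T] : x_t ∉ O} for continuous paths x (inf ∅ = T), and let 𝔪 be a probability measure on C([0,T];ℝ^d) such that 𝔪({x : τ(x) = t}) = 0 for every t ∈ [0,T]. Then for every bounded continuous f : ℝ^d → ℝ, the map t ↦ ∫ f(x_t) 1_{τ(x) > t} 𝔪(dx) is continuous on [0,T]. -/
open MeasureTheory Filter Set

noncomputable instance pathMeasurableSpace (d : ℕ) :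
    MeasurableSpace C(ℝ, EuclideanSpace ℝ (Fin d)) := borel _

/-- First exit time from `O` before `T` (with the convention `inf ∅ = T`). -/
noncomputable def exitTime {d : ℕ} (O : Set (EuclideanSpace ℝ (Fin d))) (T : ℝ)
    (x : C(ℝ, EuclideanSpace ℝ (Fin d))) : ℝ :=
  sInf ({t ∈ Set.Icc (0:ℝ) T | x t ∉ O} ∪ {T})

open Topology

section aux
variable {d : ℕ} {O : Set (EuclideanSpace ℝ (Fin d))} {T : ℝ}

lemma exitSet_bddBelow (hT : 0 ≤ T) (x : C(ℝ, EuclideanSpace ℝ (Fin d))) :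
    BddBelow ({t ∈ Set.Icc (0:ℝ) T | x t ∉ O} ∪ {T}) := by
  refine ⟨0, ?_⟩
  rintro s (⟨⟨h0, _⟩, _⟩ | rfl)
  · exact h0
  · exact hT

lemma exitTime_le (hT : 0 ≤ T) (x : C(ℝ, EuclideanSpace ℝ (Fin d))) :
    exitTime O T x ≤ T :=
  csInf_le (exitSet_bddBelow hT x) (Set.mem_union_right _ rfl)

lemma exitSet_closed (hO : IsOpen O) (x : C(ℝ, EuclideanSpace ℝ (Fin d))) :
    IsClosed ({t ∈ Set.Icc (0:ℝ) T | x t ∉ O} ∪ {T}) := by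
  have : {t ∈ Set.Icc (0:ℝ) T | x t ∉ O} = Set.Icc (0:ℝ) T ∩ (⇑x) ⁻¹' Oᶜ := by
    ext t; rfl
  rw [this]
  exact (isClosed_Icc.inter (hO.isClosed_compl.preimage x.continuous)).union isClosed_singleton

lemma exitTime_mem (hO : IsOpen O) (hT : 0 ≤ T) (x : C(ℝ, EuclideanSpace ℝ (Fin d))) :
    exitTime O T x ∈ ({t ∈ Set.Icc (0:ℝ) T | x t ∉ O} ∪ {T}) :=
  (exitSet_closed hO x).csInf_mem ⟨T, Set.mem_union_right _ rfl⟩ (exitSet_bddBelow hT x)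

lemma exitTime_gt_iff (hO : IsOpen O) (hT : 0 ≤ T) (x : C(ℝ, EuclideanSpace ℝ (Fin d)))
    {t : ℝ} (ht : t < T) :
    t < exitTime O T x ↔ ∀ s ∈ Set.Icc (0:ℝ) t, x s ∈ O := by
  constructor
  · intro h s hs
    by_contra hxs
    have hmem : s ∈ ({u ∈ Set.Icc (0:ℝ) T | x u ∉ O} ∪ {T}) :=
      Set.mem_union_left _ ⟨⟨hs.1, hs.2.trans ht.le⟩, hxs⟩
    have := csInf_le (exitSet_bddBelow hT x) hmem
    exact absurd (this.trans_lt' h) (not_lt.mpr hs.2)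
  · intro h
    rcases exitTime_mem hO hT x with hm | hm
    · by_contra hle
      push_neg at hle
      exact hm.2 (h _ ⟨hm.1.1, hle⟩)
    · rw [Set.mem_singleton_iff] at hm
      rw [hm]; exact ht

lemma measurableSet_gt (hO : IsOpen O) (hT : 0 ≤ T) (t : ℝ) :
    MeasurableSet {x : C(ℝ, EuclideanSpace ℝ (Fin d)) | t < exitTime O T x} := by
  borelize C(ℝ, EuclideanSpace ℝ (Fin d))
  rcases lt_or_ge t T with hlt | hge
  case inr =>
    have : {x : C(ℝ, EuclideanSpace ℝ (Fin d)) | t < exitTime O T x} = ∅ := by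
      ext x; simp only [Set.mem_setOf_eq, Set.mem_empty_iff_false, iff_false, not_lt]
      exact (exitTime_le hT x).trans hge
    rw [this]; exact MeasurableSet.empty
  · have : {x : C(ℝ, EuclideanSpace ℝ (Fin d)) | t < exitTime O T x}
        = {x : C(ℝ, EuclideanSpace ℝ (Fin d)) | Set.MapsTo (⇑x) (Set.Icc 0 t) O} := by
      ext x
      simp only [Set.mem_setOf_eq]
      rw [exitTime_gt_iff hO hT x hlt]
      rfl
    rw [this]
    exact (ContinuousMap.isOpen_setOf_mapsTo isCompact_Icc hO).measurableSet
end aux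

/-- If `𝔪` is a probability measure on path space giving no mass to
`{τ = t}` for any `t ∈ [0,T]`, then for every bounded continuous `f : ℝ^d → ℝ` the map
`t ↦ ∫ f(x_t) 1_{τ(x) > t} 𝔪(dx)` is continuous on `[0,T]`, i.e. the induced flow of
sub-probability measures is weakly continuous. -/
theorem subprobability_flow_continuous
    (d : ℕ) (T : ℝ) (hT : 0 < T)
    (O : Set (EuclideanSpace ℝ (Fin d))) (hO : IsOpen O)
    (𝔪 : Measure C(ℝ, EuclideanSpace ℝ (Fin d))) [IsProbabilityMeasure 𝔪]
    (h_noatom : ∀ t ∈ Set.Icc (0:ℝ) T, 𝔪 {x | exitTime O T x = t} = 0)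
    (f : EuclideanSpace ℝ (Fin d) → ℝ) (hf_cont : Continuous f)
    (hf_bdd : ∃ C, ∀ y, |f y| ≤ C) :
    ContinuousOn
      (fun t => ∫ x, (if t < exitTime O T x then f (x t) else 0) ∂𝔪)
      (Set.Icc (0:ℝ) T) := by
  have hB : BorelSpace C(ℝ, EuclideanSpace ℝ (Fin d)) := ⟨rfl⟩
  obtain ⟨C, hC⟩ := hf_bdd
  have hC0 : 0 ≤ C := (abs_nonneg _).trans (hC 0)
  intro t₀ ht₀
  apply continuousWithinAt_of_dominated (bound := fun _ => C)
  · filter_upwards [self_mem_nhdsWithin] with t _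
    have hmeas : MeasurableSet {x : C(ℝ, EuclideanSpace ℝ (Fin d)) | t < exitTime O T x} :=
      measurableSet_gt hO hT.le t
    have hsm : StronglyMeasurable
        (fun x : C(ℝ, EuclideanSpace ℝ (Fin d)) => f (x t)) :=
      (hf_cont.comp (continuous_eval_const t)).stronglyMeasurable
    have : (fun x : C(ℝ, EuclideanSpace ℝ (Fin d)) =>
        if t < exitTime O T x then f (x t) else 0)
        = Set.indicator {x | t < exitTime O T x}
            (fun x : C(ℝ, EuclideanSpace ℝ (Fin d)) => f (x t)) := by
      ext x
      by_cases h : t < exitTime O T x <;>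
        simp [Set.indicator_apply, h]
    rw [this]
    exact (hsm.indicator hmeas).aestronglyMeasurable
  · filter_upwards [self_mem_nhdsWithin] with t _
    refine ae_of_all _ fun x => ?_
    rw [Real.norm_eq_abs]
    split_ifs
    · exact hC _
    · simpa using hC0
  · exact integrable_const C
  · have hne : ∀ᵐ x ∂𝔪, exitTime O T x ≠ t₀ := by
      rw [ae_iff]
      simpa using h_noatom t₀ ht₀
    filter_upwards [hne] with x hx
    rcases lt_or_gt_of_ne hx with h | h
    · have hev : (fun t => if t < exitTime O T x then f (x t) else 0)
          =ᶠ[𝓝 t₀] fun _ => (0:ℝ) :=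
        (eventually_gt_nhds h).mono fun t ht => if_neg (not_lt.mpr ht.le)
      exact (continuousAt_const.congr hev.symm).continuousWithinAt
    · have hev : (fun t => if t < exitTime O T x then f (x t) else 0)
          =ᶠ[𝓝 t₀] fun t => f (x t) :=
        (eventually_lt_nhds h).mono fun t ht => if_pos ht
      exact (((hf_cont.comp x.continuous).continuousAt).congr hev.symm).continuousWithinAt
end

section
/- Let Ψ : P(Y) → P(Y') be continuous in the τ-topologies, and Z : Y' → ℝ₊ a fixed measurable function satisfying ∫ Z² dΨ(Q) ≤ K for all Q ∈ P(Y) (uniform L² bound) and ∫ Z dΨ(Q) = 1 for all Q. Define Ψ_Z(Q) := Z·Ψ(Q). Then Ψ_Z : P(Y) → P(Y') is continuous in the τ-topologies. -/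
open MeasureTheory Filter Set

/-- Convergence in the τ-topology on (probability) measures, phrased via nets:
integrals of every bounded measurable function converge. -/
def TauTendsto {ι Y : Type*} [MeasurableSpace Y] (l : Filter ι)
    (Q : ι → Measure Y) (Qlim : Measure Y) : Prop :=
  ∀ f : Y → ℝ, Measurable f → (∃ C, ∀ x, |f x| ≤ C) →
    Tendsto (fun i => ∫ x, f x ∂(Q i)) l (nhds (∫ x, f x ∂Qlim))

/-- Let `Ψ : P(Y) → P(Y')` be τ-continuous and `Z : Y' → ℝ₊` a fixed
measurable function with `∫ Z² dΨ(Q) ≤ K` (uniform `L²` bound) and `∫ Z dΨ(Q) = 1` for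
every probability measure `Q`. Then the reweighted map `Ψ_Z(Q) := Z · Ψ(Q)` is again
τ-continuous. -/
theorem density_reweighting_tau_continuous
    {Y Y' : Type*} [MeasurableSpace Y] [MeasurableSpace Y']
    (Ψ : Measure Y → Measure Y')
    (hΨ_cont : ∀ (ι : Type) (l : Filter ι) (Q : ι → Measure Y) (Qlim : Measure Y),
      (∀ i, IsProbabilityMeasure (Q i)) → IsProbabilityMeasure Qlim →
      TauTendsto l Q Qlim → TauTendsto l (fun i => Ψ (Q i)) (Ψ Qlim))
    (Z : Y' → ℝ) (hZ_meas : Measurable Z) (hZ_nonneg : ∀ y, 0 ≤ Z y)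
    (K : ℝ)
    (hZ_L2 : ∀ Q : Measure Y, IsProbabilityMeasure Q → ∫ y, (Z y) ^ 2 ∂(Ψ Q) ≤ K)
    (hZ_one : ∀ Q : Measure Y, IsProbabilityMeasure Q → ∫ y, Z y ∂(Ψ Q) = 1) :
    ∀ (ι : Type) (l : Filter ι) (Q : ι → Measure Y) (Qlim : Measure Y),
      (∀ i, IsProbabilityMeasure (Q i)) → IsProbabilityMeasure Qlim →
      TauTendsto l Q Qlim →
      TauTendsto l
        (fun i => (Ψ (Q i)).withDensity (fun y => ENNReal.ofReal (Z y)))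
        ((Ψ Qlim).withDensity (fun y => ENNReal.ofReal (Z y))) := by
  intro ι l Q Qlim hQ hQlim hτ
  have hτ' := hΨ_cont ι l Q Qlim hQ hQlim hτ
  have key : ∀ (μ : Measure Y') (g : Y' → ℝ),
      ∫ x, g x ∂(μ.withDensity fun y => ENNReal.ofReal (Z y)) = ∫ y, Z y * g y ∂μ := by
    intro μ g
    rw [show (fun y => ENNReal.ofReal (Z y)) = fun y => ((Z y).toNNReal : ENNReal) from rfl]
    rw [integral_withDensity_eq_integral_smul hZ_meas.real_toNNReal]
    refine integral_congr_ae (Filter.Eventually.of_forall fun y => ?_)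
    simp [NNReal.smul_def, Real.coe_toNNReal _ (hZ_nonneg y)]
  intro f hf hfb
  obtain ⟨C, hC⟩ := hfb
  simp only [key]
  set C' := max C 0 with hC'def
  have hC'0 : (0:ℝ) ≤ C' := le_max_right _ _
  have hfC : ∀ x, |f x| ≤ C' := fun x => (hC x).trans (le_max_left _ _)
  have hZint : ∀ Q' : Measure Y, IsProbabilityMeasure Q' → Integrable Z (Ψ Q') := by
    intro Q' hQ'
    by_contra h
    have h1 := hZ_one Q' hQ'
    rw [integral_undef h] at h1
    norm_num at h1
  have hminnn : ∀ (n : ℕ) (y : Y'), 0 ≤ min (Z y) (n : ℝ) :=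
    fun n y => le_min (hZ_nonneg y) (Nat.cast_nonneg n)
  have hminint : ∀ (n : ℕ) (Q' : Measure Y), IsProbabilityMeasure Q' →
      Integrable (fun y => min (Z y) (n : ℝ)) (Ψ Q') := by
    intro n Q' hQ'
    refine (hZint Q' hQ').mono ((hZ_meas.min measurable_const).aestronglyMeasurable)
      (Filter.Eventually.of_forall fun y => ?_)
    rw [Real.norm_eq_abs, Real.norm_eq_abs, abs_of_nonneg (hminnn n y),
      abs_of_nonneg (hZ_nonneg y)]
    exact min_le_left _ _
  have hmin_le_one : ∀ (n : ℕ) (Q' : Measure Y), IsProbabilityMeasure Q' →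
      ∫ y, min (Z y) (n : ℝ) ∂(Ψ Q') ≤ 1 := by
    intro n Q' hQ'
    rw [← hZ_one Q' hQ']
    exact integral_mono (hminint n Q' hQ') (hZint Q' hQ') fun y => min_le_left _ _
  have hZfint : ∀ Q' : Measure Y, IsProbabilityMeasure Q' →
      Integrable (fun y => Z y * f y) (Ψ Q') := by
    intro Q' hQ'
    refine Integrable.mono' ((hZint Q' hQ').const_mul C')
      ((hZ_meas.mul hf).aestronglyMeasurable)
      (Filter.Eventually.of_forall fun y => ?_)
    rw [Real.norm_eq_abs, abs_mul, abs_of_nonneg (hZ_nonneg y)]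
    calc Z y * |f y| ≤ Z y * C' := by
          exact mul_le_mul_of_nonneg_left (hfC y) (hZ_nonneg y)
      _ = C' * Z y := mul_comm _ _
  have hminfint : ∀ (n : ℕ) (Q' : Measure Y), IsProbabilityMeasure Q' →
      Integrable (fun y => min (Z y) (n : ℝ) * f y) (Ψ Q') := by
    intro n Q' hQ'
    refine Integrable.mono' ((hZint Q' hQ').const_mul C')
      (((hZ_meas.min measurable_const).mul hf).aestronglyMeasurable)
      (Filter.Eventually.of_forall fun y => ?_)
    rw [Real.norm_eq_abs, abs_mul, abs_of_nonneg (hminnn n y)]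
    calc min (Z y) (n : ℝ) * |f y| ≤ Z y * C' :=
          mul_le_mul (min_le_left _ _) (hfC y) (abs_nonneg _) (hZ_nonneg y)
      _ = C' * Z y := mul_comm _ _
  -- tail bound for a probability measure Q'
  have tail : ∀ (n : ℕ) (Q' : Measure Y), IsProbabilityMeasure Q' →
      |∫ y, Z y * f y ∂(Ψ Q') - ∫ y, min (Z y) (n : ℝ) * f y ∂(Ψ Q')|
        ≤ C' * (1 - ∫ y, min (Z y) (n : ℝ) ∂(Ψ Q')) := by
    intro n Q' hQ'
    rw [← integral_sub (hZfint Q' hQ') (hminfint n Q' hQ')]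
    have h1 : |∫ y, (Z y * f y - min (Z y) (n : ℝ) * f y) ∂(Ψ Q')|
        ≤ ∫ y, (Z y - min (Z y) (n : ℝ)) * C' ∂(Ψ Q') := by
      have hni : |∫ y, (Z y * f y - min (Z y) (n : ℝ) * f y) ∂(Ψ Q')|
          ≤ ∫ y, |Z y * f y - min (Z y) (n : ℝ) * f y| ∂(Ψ Q') := by
        simpa [Real.norm_eq_abs] using
          norm_integral_le_integral_norm (fun y => Z y * f y - min (Z y) (n : ℝ) * f y) (μ := Ψ Q')
      refine hni.trans (integral_mono
        ((hZfint Q' hQ').sub (hminfint n Q' hQ')).abs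
        (((hZint Q' hQ').sub (hminint n Q' hQ')).mul_const C') fun y => ?_)
      have hnn : 0 ≤ Z y - min (Z y) (n : ℝ) := sub_nonneg.mpr (min_le_left _ _)
      rw [show Z y * f y - min (Z y) (n : ℝ) * f y = (Z y - min (Z y) (n : ℝ)) * f y by ring,
        abs_mul, abs_of_nonneg hnn]
      exact mul_le_mul_of_nonneg_left (hfC y) hnn
    refine h1.trans ?_
    rw [integral_mul_const, integral_sub (hZint Q' hQ') (hminint n Q' hQ'), hZ_one Q' hQ']
    ring_nf
    exact le_refl _
  -- truncation converges at the limit measure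
  have htrunc : Tendsto (fun n : ℕ => ∫ y, min (Z y) (n : ℝ) ∂(Ψ Qlim)) atTop (nhds 1) := by
    have h := tendsto_integral_of_dominated_convergence (μ := Ψ Qlim)
      (F := fun (n : ℕ) y => min (Z y) (n : ℝ)) (f := Z) (bound := Z)
      (fun n => (hZ_meas.min measurable_const).aestronglyMeasurable)
      (hZint Qlim hQlim)
      (fun n => Filter.Eventually.of_forall fun y => by
        rw [Real.norm_eq_abs, abs_of_nonneg (hminnn n y)]; exact min_le_left _ _)
      (Filter.Eventually.of_forall fun y => ?_)
    · rwa [hZ_one Qlim hQlim] at h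
    · exact tendsto_atTop_of_eventually_const (i₀ := ⌈Z y⌉₊) fun n hn =>
        min_eq_left ((Nat.le_ceil _).trans (Nat.cast_le.mpr hn))
  rw [Metric.tendsto_nhds]
  intro ε hε
  set δ := ε / (3 * (C' + 1)) with hδdef
  have hδ : 0 < δ := div_pos hε (by positivity)
  obtain ⟨n, hn⟩ := ((Metric.tendsto_nhds.mp htrunc) δ hδ).exists
  rw [Real.dist_eq] at hn
  set g : Y' → ℝ := fun y => min (Z y) (n : ℝ) * f y with hgdef
  have hg_meas : Measurable g := (hZ_meas.min measurable_const).mul hf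
  have hg_bd : ∃ D, ∀ x, |g x| ≤ D := by
    refine ⟨(n : ℝ) * C', fun x => ?_⟩
    rw [hgdef, abs_mul, abs_of_nonneg (hminnn n x)]
    exact mul_le_mul (min_le_right _ _) (hfC x) (abs_nonneg _) (Nat.cast_nonneg n)
  have A := (Metric.tendsto_nhds.mp (hτ' g hg_meas hg_bd)) δ hδ
  have B := (Metric.tendsto_nhds.mp (hτ' (fun y => min (Z y) (n : ℝ))
      (hZ_meas.min measurable_const) ⟨(n : ℝ), fun x => by
        rw [abs_of_nonneg (hminnn n x)]; exact min_le_right _ _⟩)) δ hδ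
  filter_upwards [A, B] with i hA hB
  rw [Real.dist_eq] at hA hB ⊢
  have t1 := tail n (Q i) (hQ i)
  have t2 := tail n Qlim hQlim
  have hmi := hmin_le_one n (Q i) (hQ i)
  have hml := hmin_le_one n Qlim hQlim
  -- tails are small
  have htl : 1 - ∫ y, min (Z y) (n : ℝ) ∂(Ψ Qlim) < δ := by
    have := abs_lt.mp hn
    linarith [this.1, this.2]
  have hti : 1 - ∫ y, min (Z y) (n : ℝ) ∂(Ψ (Q i)) < 2 * δ := by
    have h1 := abs_lt.mp hB
    linarith [h1.1, h1.2, htl]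
  have tri : |∫ y, Z y * f y ∂(Ψ (Q i)) - ∫ y, Z y * f y ∂(Ψ Qlim)|
      ≤ |∫ y, Z y * f y ∂(Ψ (Q i)) - ∫ y, g y ∂(Ψ (Q i))|
        + |∫ y, g y ∂(Ψ (Q i)) - ∫ y, g y ∂(Ψ Qlim)|
        + |∫ y, g y ∂(Ψ Qlim) - ∫ y, Z y * f y ∂(Ψ Qlim)| := by
    have h1 := abs_sub_le (∫ y, Z y * f y ∂(Ψ (Q i))) (∫ y, g y ∂(Ψ (Q i)))
      (∫ y, Z y * f y ∂(Ψ Qlim))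
    have h2 := abs_sub_le (∫ y, g y ∂(Ψ (Q i))) (∫ y, g y ∂(Ψ Qlim))
      (∫ y, Z y * f y ∂(Ψ Qlim))
    linarith
  have t2' : |∫ y, g y ∂(Ψ Qlim) - ∫ y, Z y * f y ∂(Ψ Qlim)|
      ≤ C' * (1 - ∫ y, min (Z y) (n : ℝ) ∂(Ψ Qlim)) := by
    rw [abs_sub_comm]; exact t2
  have hC'δ1 : C' * (1 - ∫ y, min (Z y) (n : ℝ) ∂(Ψ (Q i))) ≤ C' * (2 * δ) :=
    mul_le_mul_of_nonneg_left hti.le hC'0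
  have hC'δ2 : C' * (1 - ∫ y, min (Z y) (n : ℝ) ∂(Ψ Qlim)) ≤ C' * δ :=
    mul_le_mul_of_nonneg_left htl.le hC'0
  have hεδ : ε = 3 * (C' + 1) * δ := by
    rw [hδdef]; field_simp
  calc |∫ y, Z y * f y ∂(Ψ (Q i)) - ∫ y, Z y * f y ∂(Ψ Qlim)|
      ≤ _ + _ + _ := tri
    _ < ε := by nlinarith [t1, hA, t2', hC'δ1, hC'δ2, hδ, hC'0]
end
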